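/- For integers 1 ≤ ℓ ≤ ℓ′ and k ≥ r ≥ 3, the quantity X := f(k,r,ℓ+ℓ′) − f(k,r,ℓ) − f(k,r,ℓ′) + ℓ·C(k/ℓ, r) is nonnegative, where f(k,r,L) = (L/2)·Σ_{i=0}^∞ C(k/(2^i L), r) and C(·,r) is the extended binomial coefficient. -/

import Mathlib

/-- The extended binomial coefficient: `z(z-1)⋯(z-r+1)/r!` when `z ≥ r-1`, and `0` otherwise. -/
noncomputable def extBinom (z : ℝ) (r : ℕ) : ℝ :=
  if (r : ℝ) - 1 ≤ z then (∏ j ∈ Finset.range r, (z - (j : ℝ))) / (Nat.factorial r) else 0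

/-- `f(k,r,L) = (L/2) Σ_{i≥0} C(k/(2^i L), r)` -/
noncomputable def fL (k r : ℕ) (L : ℝ) : ℝ :=
  (L / 2) * ∑' i : ℕ, extBinom ((k : ℝ) / (2 ^ i * L)) r

/-!
Write `g(L) = L · C(k/L, r)`. For `L ≤ k/(r-1)` this is `(k/r!) ∏_{j=1}^{r-1} (k/L - j)`, and beyond
that point it vanishes, so `g(L) = (k/r!) ∏_{j=1}^{r-1} max (k/L - j) 0` on `(0, ∞)`: a product of
nonnegative, antitone, convex factors, hence convex. Since `f(k,r,L) = Σ_i g(2^i L)/2^(i+1)`, the map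
`L ↦ f(k,r,L)` is convex on `(0, ∞)` and satisfies `2 f(L) = g(L) + f(2L)`. With `a = ℓ`, `b = ℓ'`
this turns `X` into `f(a+b) + f(a) - f(b) - f(2a)`, which is nonnegative by convexity because
`a ≤ b, 2a ≤ a + b` and `b + 2a = a + (a+b)`.
-/

open Set Finset

theorem ConvexOn.tsum {ι E : Type*} [AddCommMonoid E] [Module ℝ E] {s : Set E}
    {f : ι → E → ℝ} (hs : Convex ℝ s) (hf : ∀ i, ConvexOn ℝ s (f i))
    (hsum : ∀ x ∈ s, Summable fun i => f i x) :
    ConvexOn ℝ s fun x => ∑' i, f i x := by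
  refine ⟨hs, fun x hx y hy a b ha hb hab => ?_⟩
  simp only [smul_eq_mul]
  exact hasSum_le (fun i => (hf i).2 hx hy ha hb hab) (hsum _ (hs hx hy ha hb hab)).hasSum
    (((hsum x hx).hasSum.mul_left a).add ((hsum y hy).hasSum.mul_left b))

theorem ConvexOn.add_le_add_of_add_eq {s : Set ℝ} {f : ℝ → ℝ} (hf : ConvexOn ℝ s f)
    {x y z w : ℝ} (hx : x ∈ s) (hw : w ∈ s) (hxy : x ≤ y) (hyw : y ≤ w) (hyz : y + z = x + w) :
    f y + f z ≤ f x + f w := by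
  rcases hxy.eq_or_lt with rfl | hxy
  · obtain rfl : z = w := by linarith
    exact le_rfl
  have hwx : 0 < w - x := by linarith
  have ha : 0 ≤ (w - y) / (w - x) := div_nonneg (by linarith) hwx.le
  have hb : 0 ≤ (y - x) / (w - x) := div_nonneg (by linarith) hwx.le
  have hab : (w - y) / (w - x) + (y - x) / (w - x) = 1 := by field_simp; ring
  have hy : (w - y) / (w - x) * x + (y - x) / (w - x) * w = y := by field_simp; ring
  have hz : (y - x) / (w - x) * x + (w - y) / (w - x) * w = z := by
    rw [show z = x + w - y by linarith]; field_simp; ring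
  have h₁ := hf.2 hx hw ha hb hab
  have h₂ := hf.2 hx hw hb ha (by linarith)
  simp only [smul_eq_mul, hy, hz] at h₁ h₂
  calc f y + f z ≤ ((w - y) / (w - x) + (y - x) / (w - x)) * (f x + f w) := by linarith
    _ = f x + f w := by rw [hab, one_mul]

theorem AntitoneOn.finset_prod {ι E : Type*} [Preorder E] {s : Set E} {t : Finset ι}
    {f : ι → E → ℝ} (hf₀ : ∀ i ∈ t, ∀ x ∈ s, 0 ≤ f i x)
    (hf : ∀ i ∈ t, AntitoneOn (f i) s) : AntitoneOn (fun x => ∏ i ∈ t, f i x) s :=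
  fun _ hx _ hy hxy => prod_le_prod (fun i hi => hf₀ i hi _ hy) fun i hi => hf i hi hx hy hxy

theorem ConvexOn.finset_prod_of_antitoneOn {ι : Type*} {s : Set ℝ} {t : Finset ι}
    {f : ι → ℝ → ℝ} (hs : Convex ℝ s) (hf : ∀ i ∈ t, ConvexOn ℝ s (f i))
    (hf₀ : ∀ i ∈ t, ∀ x ∈ s, 0 ≤ f i x) (hfa : ∀ i ∈ t, AntitoneOn (f i) s) :
    ConvexOn ℝ s fun x => ∏ i ∈ t, f i x := by
  classical
  induction t using Finset.induction_on with
  | empty => simpa using convexOn_const (1 : ℝ) hs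
  | insert j t hj ih =>
    simp only [prod_insert hj]
    have hf₀' : ∀ i ∈ t, ∀ x ∈ s, 0 ≤ f i x := fun i hi => hf₀ i (mem_insert_of_mem hi)
    have hfa' : ∀ i ∈ t, AntitoneOn (f i) s := fun i hi => hfa i (mem_insert_of_mem hi)
    exact (hf j (mem_insert_self j t)).mul (ih (fun i hi => hf i (mem_insert_of_mem hi)) hf₀' hfa')
      (hf₀ j (mem_insert_self j t)) (fun x hx => prod_nonneg fun i hi => hf₀' i hi x hx)
      ((hfa j (mem_insert_self j t)).monovaryOn (AntitoneOn.finset_prod hf₀' hfa'))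

theorem extBinom_eq_zero_of_lt {z : ℝ} {r : ℕ} (h : z < r - 1) : extBinom z r = 0 :=
  if_neg (not_le.2 h)

theorem mul_extBinom_div_eq_prod {k L : ℝ} {r : ℕ} (hr : 2 ≤ r) (hL : L ≠ 0) :
    L * extBinom (k / L) r = k / r.factorial * ∏ j ∈ range (r - 1), max (k / L - (j + 1)) 0 := by
  by_cases h : (r : ℝ) - 1 ≤ k / L
  · have hmax : ∀ j ∈ range (r - 1), max (k / L - (j + 1)) 0 = k / L - (j + 1) := by
      intro j hj
      have : (j : ℝ) + 1 ≤ r - 1 := by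
        have : j + 2 ≤ r := by have := mem_range.1 hj; omega
        have : ((j + 2 : ℕ) : ℝ) ≤ r := by exact_mod_cast this
        push_cast at this; linarith
      exact max_eq_left (by linarith)
    rw [prod_congr rfl hmax, extBinom, if_pos h, ← Nat.sub_add_cancel (by omega : 1 ≤ r),
      prod_range_succ']
    simp only [Nat.add_sub_cancel, Nat.cast_add, Nat.cast_one, Nat.cast_zero, sub_zero]
    field_simp
  · have hlast : r - 2 ∈ range (r - 1) := mem_range.2 (by omega)
    rw [extBinom_eq_zero_of_lt (not_le.1 h), mul_zero,
      prod_eq_zero hlast (max_eq_right (by push_cast [Nat.cast_sub hr]; linarith)), mul_zero]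

theorem convexOn_mul_extBinom_div {k : ℝ} (hk : 0 ≤ k) {r : ℕ} (hr : 2 ≤ r) :
    ConvexOn ℝ (Ioi 0) fun L => L * extBinom (k / L) r := by
  have hinv : ConvexOn ℝ (Ioi (0 : ℝ)) fun L => k / L :=
    ((convexOn_zpow (-1)).smul hk).congr fun L _ => by simp [div_eq_mul_inv]
  have hconv (c : ℝ) : ConvexOn ℝ (Ioi 0) fun L => max (k / L - c) 0 :=
    ((hinv.add_const (-c)).sup (convexOn_const 0 (convex_Ioi 0))).congr fun L _ => by
      simp [sub_eq_add_neg]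
  have hanti (c : ℝ) : AntitoneOn (fun L => max (k / L - c) 0) (Ioi 0) :=
    fun _ hx _ _ hxy => max_le_max (sub_le_sub_right (div_le_div_of_nonneg_left hk hx hxy) c) le_rfl
  have hprod : ConvexOn ℝ (Ioi 0) fun L => ∏ j ∈ range (r - 1), max (k / L - ((j : ℕ) + 1)) 0 :=
    ConvexOn.finset_prod_of_antitoneOn (convex_Ioi 0) (fun j _ => hconv (j + 1))
      (fun _ _ _ _ => le_max_right _ _) fun j _ => hanti (j + 1)
  exact (hprod.smul (by positivity : 0 ≤ k / r.factorial)).congr fun L hL =>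
    (mul_extBinom_div_eq_prod hr (ne_of_gt hL)).symm

theorem summable_extBinom_div_two_pow_mul {k L : ℝ} {r : ℕ} (hr : 2 ≤ r) (hL : 0 < L) :
    Summable fun i : ℕ => extBinom (k / (2 ^ i * L)) r := by
  obtain ⟨N, hN⟩ := pow_unbounded_of_one_lt (k / L) one_lt_two
  refine summable_of_ne_finset_zero (s := range N) fun i hi => extBinom_eq_zero_of_lt ?_
  have hNi : (2 : ℝ) ^ N ≤ 2 ^ i := pow_le_pow_right₀ one_le_two (by simpa using hi)
  have hr' : (2 : ℝ) ≤ r := by exact_mod_cast hr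
  have : k / (2 ^ i * L) < 1 := by
    rw [div_lt_one (by positivity)]
    rw [div_lt_iff₀ hL] at hN
    nlinarith
  linarith

theorem fL_eq_tsum (k r : ℕ) (L : ℝ) :
    fL k r L = ∑' i : ℕ, (2 : ℝ)⁻¹ • (L * extBinom ((k / 2 ^ i : ℝ) / L) r) := by
  rw [fL, ← tsum_mul_left]
  congr 1 with i
  rw [div_div, smul_eq_mul]
  ring

theorem convexOn_fL (k : ℕ) {r : ℕ} (hr : 2 ≤ r) : ConvexOn ℝ (Ioi 0) (fL k r) := by
  refine (ConvexOn.tsum (convex_Ioi 0)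
    (fun i => (convexOn_mul_extBinom_div (by positivity) hr).smul (by norm_num)) ?_).congr
    fun L _ => (fL_eq_tsum k r L).symm
  intro L hL
  refine ((summable_extBinom_div_two_pow_mul (k := k) hr hL).mul_left (2⁻¹ * L)).congr fun i => ?_
  rw [div_div, smul_eq_mul]
  ring

theorem fL_eq_half_add (k : ℕ) {r : ℕ} (hr : 2 ≤ r) {L : ℝ} (hL : 0 < L) :
    fL k r L = (L * extBinom (k / L) r + fL k r (2 * L)) / 2 := by
  rw [fL, fL, (summable_extBinom_div_two_pow_mul hr hL).tsum_eq_zero_add]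
  simp only [pow_zero, one_mul, pow_succ, mul_assoc]
  ring

theorem X_nonneg_general (k r ℓ ℓ' : ℕ) (hr : 3 ≤ r)
    (hl : 1 ≤ ℓ) (hll : ℓ ≤ ℓ') :
    0 ≤ fL k r ((ℓ : ℝ) + (ℓ' : ℝ)) - fL k r (ℓ : ℝ) - fL k r (ℓ' : ℝ)
        + (ℓ : ℝ) * extBinom ((k : ℝ) / (ℓ : ℝ)) r := by
  have hr₂ : 2 ≤ r := by omega
  have ha : (0 : ℝ) < ℓ := by exact_mod_cast hl
  have hab : (ℓ : ℝ) ≤ ℓ' := by exact_mod_cast hll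
  have hfour := (convexOn_fL k hr₂).add_le_add_of_add_eq (y := ℓ') (z := 2 * ℓ)
    (show (ℓ : ℝ) ∈ Set.Ioi 0 from ha)
    (show (ℓ : ℝ) + ℓ' ∈ Set.Ioi 0 by simp only [Set.mem_Ioi]; linarith) hab (by linarith) (by ring)
  linarith [fL_eq_half_add k hr₂ ha]

theorem X_nonneg (k r ℓ ℓ' : ℕ) (hr : 3 ≤ r) (hk : r ≤ k)
    (hl : 1 ≤ ℓ) (hll : ℓ ≤ ℓ') :
    0 ≤ fL k r ((ℓ : ℝ) + (ℓ' : ℝ)) - fL k r (ℓ : ℝ) - fL k r (ℓ' : ℝ)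
        + (ℓ : ℝ) * extBinom ((k : ℝ) / (ℓ : ℝ)) r :=
  X_nonneg_general k r ℓ ℓ' hr hl hll
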